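/- Connected components decomposition: let D be a polyhedra system and Sing(D) = ∪_α C_α the decomposition of its singular locus into connected components (for the subspace Zariski topology on H). If for each α the reduction Red_{C_α}(D) admits a reduction of singularities, then D admits a reduction of singularities. -/

import Mathlib

open scoped Pointwise

namespace RedSing

/-! ### Vectors and polyhedra.
A vector "in `ℝ^J`" is a function `ℕ → ℝ` supported on the finite set `J`. -/

abbrev Vec : Type := ℕ → ℝ

/-- The cone `ℝ_{≥0}^J` of nonnegative vectors supported on `J`. -/
def suppCone (J : Finset ℕ) : Set Vec :=
  {σ | (∀ j, 0 ≤ σ j) ∧ ∀ j, j ∉ J → σ j = 0}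

/-- Positive convex hull `[[A]] = convexHull (A + ℝ_{≥0}^J)`. -/
noncomputable def posHull (J : Finset ℕ) (A : Set Vec) : Set Vec :=
  convexHull ℝ (A + suppCone J)

/-- The lattice points `(1/d)·ℤ_{≥0}^J`. -/
def latticePts (J : Finset ℕ) (d : ℕ) : Set Vec :=
  {σ | σ ∈ suppCone J ∧ ∀ j, ∃ m : ℕ, σ j = (m : ℝ) / (d : ℝ)}

/-- `Δ ⊆ ℝ_{≥0}^J` is a characteristic polyhedron with denominator `d`. -/
def IsCharPoly (J : Finset ℕ) (d : ℕ) (Δ : Set Vec) : Prop :=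
  ∃ A, A ⊆ latticePts J d ∧ Δ = posHull J A

/-! ### Support fabrics -/

/-- A support fabric: a nonempty finite index set `I` together with a
downward-closed family `H` of subsets of `I` (the strata). -/
structure Fabric where
  I : Finset ℕ
  I_nonempty : I.Nonempty
  H : Set (Finset ℕ)
  mem_sub : ∀ J ∈ H, J ⊆ I
  downward : ∀ J ∈ H, ∀ J' ⊆ J, J' ∈ H

/-- Dimension of a support fabric: the maximal cardinality of a stratum. -/
noncomputable def Fabric.dim (F : Fabric) : ℕ :=
  sSup {n | ∃ J ∈ F.H, J.card = n}

/-- The Zariski topology on finsets: the open sets are the downward-closed families;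
subsets such as the strata set `H` carry the subspace topology. -/
instance zariskiTopology : TopologicalSpace (Finset ℕ) where
  IsOpen U := ∀ J ∈ U, ∀ J' ⊆ J, J' ∈ U
  isOpen_univ := fun J _ J' _ => Set.mem_univ J'
  isOpen_inter := fun s t hs ht J hJ J' hJ' => ⟨hs J hJ.1 J' hJ', ht J hJ.2 J' hJ'⟩
  isOpen_sUnion := fun S hS J hJ J' hJ' => by
    obtain ⟨t, htS, hJt⟩ := hJ
    exact ⟨t, htS, hS t htS J hJt J' hJ'⟩

/-! ### Polyhedra systems -/

/-- A polyhedra system over a support fabric: a nonempty characteristic polyhedron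
with denominator `d` for each stratum, compatible with the projections
(restriction of functions). -/
structure PolySys where
  F : Fabric
  d : ℕ
  d_pos : 0 < d
  Δ : Finset ℕ → Set Vec
  char : ∀ J ∈ F.H, IsCharPoly J d (Δ J)
  nonempty : ∀ J ∈ F.H, (Δ J).Nonempty
  compat : ∀ J₁ ∈ F.H, ∀ J₂ ∈ F.H, J₁ ⊆ J₂ →
    Δ J₁ = (fun σ => fun j => if j ∈ J₁ then σ j else 0) '' Δ J₂

/-- Contact exponent `δ(Δ) = min {|σ| : σ ∈ Δ}` (with the convention `δ = -1`
for the empty index set). -/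
noncomputable def contactExp (J : Finset ℕ) (Δ : Set Vec) : ℝ :=
  if J = (∅ : Finset ℕ) then -1 else sInf ((fun σ => ∑ j ∈ J, σ j) '' Δ)

/-- Singular locus: strata with contact exponent at least 1. -/
def Sing (D : PolySys) : Set (Finset ℕ) :=
  {J | J ∈ D.F.H ∧ 1 ≤ contactExp J (D.Δ J)}

/-- `D` is special: `δ(D) = max {δ(Δ_J)} = 1`. -/
def IsSpecial (D : PolySys) : Prop :=
  (∀ J ∈ D.F.H, contactExp J (D.Δ J) ≤ 1) ∧ ∃ J ∈ D.F.H, contactExp J (D.Δ J) = 1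

/-! ### Blow-ups and transforms -/

/-- The strata of the blow-up centered in `J`, with new index `inf` (playing `∞`). -/
def blowupH (H : Set (Finset ℕ)) (J : Finset ℕ) (inf : ℕ) : Set (Finset ℕ) :=
  {K | K ∈ H ∧ ¬ J ⊆ K} ∪
    {J' | ∃ K, (K ∈ H ∧ J ⊆ K) ∧ ∃ A, A ⊂ J ∧ J' = (K \ J) ∪ A ∪ {inf}}

/-- The map `π_J^#` from the strata of the blow-up to the strata of `F`. -/
def blowdown (J : Finset ℕ) (inf : ℕ) (J' : Finset ℕ) : Finset ℕ :=
  if inf ∈ J' then (J'.erase inf) ∪ J else J'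

/-- The map `λ_{J'} : ℝ^K → ℝ^{J'}`. -/
noncomputable def lamMap (J J' : Finset ℕ) (inf : ℕ) (σ : Vec) : Vec :=
  fun j => if j = inf then ∑ i ∈ J, σ i else if j ∈ J' then σ j else 0

/-- The indicator vector `e_{J',∞}` of the new index. -/
def eVec (inf : ℕ) : Vec := fun j => if j = inf then 1 else 0

/-- The polyhedron `Δ⁰_{J'}` of the total transform at a stratum `J'` of the blow-up. -/
noncomputable def totalΔ (D : PolySys) (J : Finset ℕ) (inf : ℕ) (J' : Finset ℕ) : Set Vec :=
  if inf ∈ J' then posHull J' (lamMap J J' inf '' D.Δ (blowdown J inf J'))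
  else D.Δ J'

/-- The polyhedron `Δ'_{J'} = Δ⁰_{J'} - e_{J',∞}` of the characteristic transform
(`e_{J',∞} = 0` when `∞ ∉ J'`). -/
noncomputable def charΔ (D : PolySys) (J : Finset ℕ) (inf : ℕ) (J' : Finset ℕ) : Set Vec :=
  if inf ∈ J' then
    (fun σ => σ - eVec inf) '' posHull J' (lamMap J J' inf '' D.Δ (blowdown J inf J'))
  else D.Δ J'

/-- `D'` is the total transform `Λ⁰_J(D)` of `D` centered in the nonempty stratum `J`,
with new index `inf`. -/
def IsTotalTransformAt (D D' : PolySys) (J : Finset ℕ) (inf : ℕ) : Prop :=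
  J ∈ D.F.H ∧ J ≠ ∅ ∧ D'.d = D.d ∧ inf ∉ D.F.I ∧
  D'.F.I = insert inf D.F.I ∧ D'.F.H = blowupH D.F.H J inf ∧
  ∀ J' ∈ D'.F.H, D'.Δ J' = totalΔ D J inf J'

/-- `D'` is a total transform of `D` centered in `J`. -/
def IsTotalTransform (D D' : PolySys) (J : Finset ℕ) : Prop :=
  ∃ inf, IsTotalTransformAt D D' J inf

/-- `D'` is the characteristic transform `Λ_J(D)` of `D` centered in the singular
stratum `J`, with new index `inf`. -/
def IsCharTransformAt (D D' : PolySys) (J : Finset ℕ) (inf : ℕ) : Prop :=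
  J ∈ Sing D ∧ D'.d = D.d ∧ inf ∉ D.F.I ∧
  D'.F.I = insert inf D.F.I ∧ D'.F.H = blowupH D.F.H J inf ∧
  ∀ J' ∈ D'.F.H, D'.Δ J' = charΔ D J inf J'

/-- `D'` is a characteristic transform of `D` centered in `J`. -/
def IsCharTransform (D D' : PolySys) (J : Finset ℕ) : Prop :=
  ∃ inf, IsCharTransformAt D D' J inf

/-- A reduction of singularities of `D`: a finite sequence of characteristic
transforms, each centered in a singular stratum of the previous system, ending
in a system with empty singular locus. -/
def HasReduction (D : PolySys) : Prop :=
  ∃ (k : ℕ) (seq : ℕ → PolySys), seq 0 = D ∧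
    (∀ i, i < k → ∃ J, IsCharTransform (seq i) (seq (i + 1)) J) ∧
    Sing (seq k) = ∅

/-! ### Strict tangent space and maximal contact -/

/-- Hironaka's strict tangent space `T(Δ)` of a polyhedron `Δ ⊆ ℝ_{≥0}^J`. -/
def strictTangent (J : Finset ℕ) (Δ : Set Vec) : Set ℕ :=
  {j | ∃ σ ∈ Δ, (∑ i ∈ J, σ i) = 1 ∧ σ j ≠ 0}

/-- The stratum `T` has maximal contact with the (special) system `D`. -/
def HasMaximalContact (D : PolySys) (T : Finset ℕ) : Prop :=
  T ∈ D.F.H ∧ ∀ J ∈ Sing D, (↑T : Set ℕ) ⊆ strictTangent J (D.Δ J)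

/-! ### Hironaka's projection from a stratum `T` -/

/-- Hironaka's projection `∇_J^T(σ) = σ|_{J∖T} / (1 - Σ_{j∈T} σ(j))`. -/
noncomputable def hironakaProj (T J : Finset ℕ) (σ : Vec) : Vec :=
  fun j => if j ∈ J \ T then σ j / (1 - ∑ i ∈ T, σ i) else 0

/-- The polyhedron `Δ^T_{J*} = ∇_J^T(Δ_J ∩ M_J^T)` of Hironaka's projection,
where `J = J* ∪ T`. -/
noncomputable def projΔ (D : PolySys) (T J' : Finset ℕ) : Set Vec :=
  hironakaProj T (J' ∪ T) '' {σ | σ ∈ D.Δ (J' ∪ T) ∧ (∑ i ∈ T, σ i) < 1}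

/-- The strata `H^T = {J ∖ T : T ⊆ J ∈ H}` of the projected fabric `F^T`. -/
def projH (F : Fabric) (T : Finset ℕ) : Set (Finset ℕ) :=
  {J' | ∃ J, (J ∈ F.H ∧ T ⊆ J) ∧ J' = J \ T}

/-- The singular locus of Hironaka's projection `D^T`. -/
def projSing (D : PolySys) (T : Finset ℕ) : Set (Finset ℕ) :=
  {J' | J' ∈ projH D.F T ∧ (projΔ D T J').Nonempty ∧ 1 ≤ contactExp J' (projΔ D T J')}

/-- `E` is Hironaka's projection `D^T` of `D` from the stratum `T`
(a polyhedra system over `F^T` with denominator `d!·d`). -/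
def IsHironakaProjection (D E : PolySys) (T : Finset ℕ) : Prop :=
  E.F.I = D.F.I \ T ∧ E.F.H = projH D.F T ∧ E.d = Nat.factorial D.d * D.d ∧
  ∀ J' ∈ E.F.H, E.Δ J' = projΔ D T J'

/-! ### Reduction `Red_C` of a system to a closed set `C` of strata -/

/-- The fabric `Red_C(F)`, with strata `H_C = ⋃_{J ∈ C} P(J)`. -/
def Fabric.red (F : Fabric) (C : Set (Finset ℕ)) : Fabric where
  I := F.I
  I_nonempty := F.I_nonempty
  H := {J' | ∃ J, (J ∈ C ∧ J ∈ F.H) ∧ J' ⊆ J}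
  mem_sub := by
    rintro J' ⟨J, ⟨_, hJH⟩, hsub⟩
    exact hsub.trans (F.mem_sub J hJH)
  downward := by
    rintro J' ⟨J, hJ, hsub⟩ J'' hsub'
    exact ⟨J, hJ, hsub'.trans hsub⟩

/-- The reduction `Red_C(D)` of a polyhedra system to a closed set `C ⊆ H`. -/
noncomputable def PolySys.red (D : PolySys) (C : Set (Finset ℕ)) : PolySys where
  F := D.F.red C
  d := D.d
  d_pos := D.d_pos
  Δ := D.Δ
  char := by
    rintro J ⟨K, ⟨_, hK⟩, hsub⟩
    exact D.char J (D.F.downward K hK J hsub)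
  nonempty := by
    rintro J ⟨K, ⟨_, hK⟩, hsub⟩
    exact D.nonempty J (D.F.downward K hK J hsub)
  compat := by
    rintro J₁ ⟨K₁, ⟨_, hK₁⟩, h₁⟩ J₂ ⟨K₂, ⟨_, hK₂⟩, h₂⟩ h12
    exact D.compat J₁ (D.F.downward K₁ hK₁ J₁ h₁) J₂ (D.F.downward K₂ hK₂ J₂ h₂) h12

/-- A special polyhedra system is consistent if for each connected component `C`
of its singular locus there is a stratum having maximal contact with `Red_C(D)`
(non-singular systems are consistent by convention). -/
def IsConsistent (D : PolySys) : Prop :=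
  ∀ x ∈ Sing D, ∃ T, HasMaximalContact (D.red (connectedComponentIn (Sing D) x)) T

/-! ### Fitting and Spivakovsky's invariant -/

/-- The fitting vector `w_Δ(j) = min {σ(j) : σ ∈ Δ}`. -/
noncomputable def fitVec (Δ : Set Vec) : Vec := fun j => sInf ((fun σ => σ j) '' Δ)

/-- The fitting `Δ̃ = Δ - w_Δ`. -/
noncomputable def fitting (Δ : Set Vec) : Set Vec := (fun σ => σ - fitVec Δ) '' Δ

/-- Spivakovsky's invariant `Spi_D = max {δ(Δ̃_J) : J ∈ Sing(D)}`. -/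
noncomputable def spi (D : PolySys) : ℝ :=
  sSup {x | ∃ J ∈ Sing D, contactExp J (fitting (D.Δ J)) = x}

/-- `S(D) = {J ∈ Sing(D) : δ(Δ̃_J) = Spi_D}`. -/
def SSet (D : PolySys) : Set (Finset ℕ) :=
  {J | J ∈ Sing D ∧ contactExp J (fitting (D.Δ J)) = spi D}

/-! ### Moderated transforms, normal crossings, quasi-ordinary systems -/

/-- The polyhedron of the `d`-moderated transform `Θ^d_J(N) = N(Λ_J(N/d))`
at a stratum `J'` of the blow-up. -/
noncomputable def modΔ (N : PolySys) (d : ℕ) (J : Finset ℕ) (inf : ℕ) (J' : Finset ℕ) :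
    Set Vec :=
  if inf ∈ J' then
    (fun σ => σ - (d : ℝ) • eVec inf) ''
      posHull J' (lamMap J J' inf '' N.Δ (blowdown J inf J'))
  else N.Δ J'

/-- `N'` is the `d`-moderated transform `Θ^d_J(N)` of the Newton polyhedra system `N`
centered in a stratum `J` with `δ(N_J) ≥ d`, with new index `inf`. -/
def IsModTransformAt (N N' : PolySys) (d : ℕ) (J : Finset ℕ) (inf : ℕ) : Prop :=
  N.d = 1 ∧ N'.d = 1 ∧ J ∈ N.F.H ∧ (d : ℝ) ≤ contactExp J (N.Δ J) ∧ inf ∉ N.F.I ∧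
  N'.F.I = insert inf N.F.I ∧ N'.F.H = blowupH N.F.H J inf ∧
  ∀ J' ∈ N'.F.H, N'.Δ J' = modΔ N d J inf J'

/-- `N'` is a `d`-moderated transform of `N` centered in `J`. -/
def IsModTransform (N N' : PolySys) (d : ℕ) (J : Finset ℕ) : Prop :=
  ∃ inf, IsModTransformAt N N' d J inf

/-- A Newton polyhedra system has normal crossings if each polyhedron has a
single vertex. -/
def HasNormalCrossings (D : PolySys) : Prop :=
  ∀ J ∈ D.F.H, ∃ σ, D.Δ J = posHull J {σ}

/-- `D` is Hironaka quasi-ordinary: each polyhedron over a singular stratum has a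
single vertex. -/
def IsQuasiOrdinary (D : PolySys) : Prop :=
  ∀ J ∈ Sing D, ∃ σ, D.Δ J = posHull J {σ}

/-! ### Lexicographic order on sequences of naturals -/

/-- Strict lexicographic order on sequences `ℕ → ℕ`. -/
def LexLt (φ ψ : ℕ → ℕ) : Prop := ∃ n, φ n < ψ n ∧ ∀ m < n, φ m = ψ m

/-- A weakly decreasing sequence of naturals. -/
def WeaklyDecr (φ : ℕ → ℕ) : Prop := ∀ n, φ (n + 1) ≤ φ n

/-!
Two singular strata `J ⊆ K` lie in the same connected component of `Sing(D)`, since in the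
Zariski topology `J` specializes to `K`. So a component `C` is closed under comparability inside
`Sing(D)`, and a center taken in `C` is contained in no stratum of `D` outside `H_C`: blowing it up
leaves those strata, and with them the other components, untouched. A reduction of `Red_C(D)`
therefore lifts center by center to a sequence of characteristic transforms of `D` ending with
singular locus `Sing(D) ∖ C`; its new indices are relabelled on the way so as to be fresh for the
lifted system. Induction on the number of singular strata concludes.
-/

section Polyhedra

lemma convex_suppCone (J : Finset ℕ) : Convex ℝ (suppCone J) := by
  intro σ hσ τ hτ a b ha hb _
  refine ⟨fun j => ?_, fun j hj => by simp [hσ.2 j hj, hτ.2 j hj]⟩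
  simpa using add_nonneg (mul_nonneg ha (hσ.1 j)) (mul_nonneg hb (hτ.1 j))

lemma zero_mem_suppCone (J : Finset ℕ) : (0 : Vec) ∈ suppCone J :=
  ⟨fun _ => le_rfl, fun _ _ => rfl⟩

lemma add_suppCone_of_subset {J : Finset ℕ} {T : Set Vec} (hT : T ⊆ suppCone J)
    (h0 : (0 : Vec) ∈ T) : T + suppCone J = suppCone J := by
  refine (Set.add_subset_iff.2 fun σ hσ τ hτ => ?_).antisymm (Set.subset_add_right _ h0)
  exact ⟨fun j => add_nonneg ((hT hσ).1 j) (hτ.1 j),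
    fun j hj => by simp [(hT hσ).2 j hj, hτ.2 j hj]⟩

lemma posHull_eq_convexHull_add (J : Finset ℕ) (S : Set Vec) :
    posHull J S = convexHull ℝ S + suppCone J := by
  rw [posHull, convexHull_add, (convex_suppCone J).convexHull_eq]

lemma subset_posHull (J : Finset ℕ) (S : Set Vec) : S ⊆ posHull J S := by
  rw [posHull_eq_convexHull_add]
  exact (subset_convexHull ℝ S).trans (Set.subset_add_left _ (zero_mem_suppCone J))

lemma image_posHull (f : Vec →ₗ[ℝ] Vec) {J K : Finset ℕ}
    (hf : f '' suppCone K = suppCone J) (S : Set Vec) :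
    f '' posHull K S = posHull J (f '' S) := by
  rw [posHull_eq_convexHull_add, posHull_eq_convexHull_add, Set.image_add,
    LinearMap.image_convexHull, hf]

lemma posHull_image_posHull (f : Vec →ₗ[ℝ] Vec) {J K : Finset ℕ}
    (hf : f '' suppCone K ⊆ suppCone J) (S : Set Vec) :
    posHull J (f '' posHull K S) = posHull J (f '' S) := by
  have hconv : Convex ℝ (f '' posHull K S) := (convex_convexHull ℝ _).linear_image f
  have h0 : (0 : Vec) ∈ f '' suppCone K := ⟨0, zero_mem_suppCone K, map_zero f⟩
  rw [posHull_eq_convexHull_add, hconv.convexHull_eq, posHull_eq_convexHull_add,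
    Set.image_add, LinearMap.image_convexHull, add_assoc, add_suppCone_of_subset hf h0,
    posHull_eq_convexHull_add]

lemma image_sub_posHull (J : Finset ℕ) (S : Set Vec) (e : Vec) :
    (fun σ => σ - e) '' posHull J S = posHull J ((fun σ => σ - e) '' S) := by
  simp only [sub_eq_add_neg, ← Set.add_singleton, posHull_eq_convexHull_add, convexHull_add,
    convexHull_singleton, add_right_comm]

def restrict (J : Finset ℕ) : Vec →ₗ[ℝ] Vec where
  toFun σ j := if j ∈ J then σ j else 0
  map_add' σ τ := by ext j; by_cases h : j ∈ J <;> simp [h]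
  map_smul' a σ := by ext j; by_cases h : j ∈ J <;> simp [h]

lemma restrict_apply (J : Finset ℕ) (σ : Vec) (j : ℕ) :
    restrict J σ j = if j ∈ J then σ j else 0 :=
  rfl

lemma image_restrict_suppCone {J₁ J₂ : Finset ℕ} (h : J₁ ⊆ J₂) :
    restrict J₁ '' suppCone J₂ = suppCone J₁ := by
  refine Set.Subset.antisymm ?_ fun σ hσ => ⟨σ, ⟨hσ.1, fun j hj => hσ.2 j
    fun h' => hj (h h')⟩, funext fun j => ?_⟩
  · rintro _ ⟨σ, hσ, rfl⟩
    refine ⟨fun j => ?_, fun j hj => by simp [restrict_apply, hj]⟩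
    by_cases hj : j ∈ J₁ <;> simp [restrict_apply, hj, hσ.1 j]
  · by_cases hj : j ∈ J₁ <;> simp [restrict_apply, hj, hσ.2 j]

namespace IsCharPoly

variable {J : Finset ℕ} {d : ℕ} {Δ : Set Vec}

lemma convex (h : IsCharPoly J d Δ) : Convex ℝ Δ := by
  obtain ⟨A, -, rfl⟩ := h
  exact convex_convexHull ℝ _

lemma subset_suppCone (h : IsCharPoly J d Δ) : Δ ⊆ suppCone J := by
  obtain ⟨A, hA, rfl⟩ := h
  refine convexHull_min ?_ (convex_suppCone J)
  calc A + suppCone J ⊆ suppCone J + suppCone J :=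
        Set.add_subset_add (fun a ha => (hA ha).1) le_rfl
    _ = suppCone J := add_suppCone_of_subset subset_rfl (zero_mem_suppCone J)

lemma posHull_eq (h : IsCharPoly J d Δ) : posHull J Δ = Δ := by
  rw [posHull_eq_convexHull_add, h.convex.convexHull_eq]
  obtain ⟨A, -, rfl⟩ := h
  rw [posHull_eq_convexHull_add, add_assoc,
    add_suppCone_of_subset subset_rfl (zero_mem_suppCone J)]

end IsCharPoly

end Polyhedra

section Singular

variable {G : PolySys} {J K : Finset ℕ}

lemma PolySys.Δ_subset_suppCone (hJ : J ∈ G.F.H) : G.Δ J ⊆ suppCone J :=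
  (G.char J hJ).subset_suppCone

lemma PolySys.Δ_eq_image_restrict (G : PolySys) {J₁ J₂ : Finset ℕ} (h₁ : J₁ ∈ G.F.H)
    (h₂ : J₂ ∈ G.F.H) (h : J₁ ⊆ J₂) : G.Δ J₁ = restrict J₁ '' G.Δ J₂ :=
  G.compat J₁ h₁ J₂ h₂ h

lemma one_le_sum_of_mem_sing (hJ : J ∈ Sing G) {σ : Vec} (hσ : σ ∈ G.Δ J) :
    1 ≤ ∑ j ∈ J, σ j := by
  obtain ⟨hJH, hδ⟩ := hJ
  rcases eq_or_ne J ∅ with rfl | hne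
  · rw [contactExp, if_pos rfl] at hδ; linarith
  rw [contactExp, if_neg hne] at hδ
  refine hδ.trans (csInf_le ⟨0, ?_⟩ ⟨σ, hσ, rfl⟩)
  rintro _ ⟨τ, hτ, rfl⟩
  exact Finset.sum_nonneg fun j _ => (G.Δ_subset_suppCone hJH hτ).1 j

lemma ne_empty_of_mem_sing (hJ : J ∈ Sing G) : J ≠ ∅ := by
  rintro rfl
  have := hJ.2
  rw [contactExp, if_pos rfl] at this
  linarith

lemma one_le_sum_of_mem_sing_of_subset (hJ : J ∈ Sing G) (hK : K ∈ G.F.H) (hJK : J ⊆ K)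
    {σ : Vec} (hσ : σ ∈ G.Δ K) : 1 ≤ ∑ j ∈ J, σ j := by
  have hres : restrict J σ ∈ G.Δ J :=
    G.Δ_eq_image_restrict hJ.1 hK hJK ▸ Set.mem_image_of_mem _ hσ
  simpa [restrict_apply, Finset.sum_ite_mem] using one_le_sum_of_mem_sing hJ hres

lemma mem_sing_of_subset (hJ : J ∈ Sing G) (hK : K ∈ G.F.H) (hJK : J ⊆ K) : K ∈ Sing G := by
  refine ⟨hK, ?_⟩
  have hKne : K ≠ ∅ := fun h => ne_empty_of_mem_sing hJ (Finset.subset_empty.1 (h ▸ hJK))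
  rw [contactExp, if_neg hKne]
  refine le_csInf ((G.nonempty K hK).image _) ?_
  rintro _ ⟨σ, hσ, rfl⟩
  exact (one_le_sum_of_mem_sing_of_subset hJ hK hJK hσ).trans <|
    Finset.sum_le_sum_of_subset_of_nonneg hJK fun j _ _ => (G.Δ_subset_suppCone hK hσ).1 j

lemma finite_sing (G : PolySys) : (Sing G).Finite :=
  G.F.I.powerset.finite_toSet.subset fun J hJ =>
    Finset.mem_coe.2 (Finset.mem_powerset.2 (G.F.mem_sub J hJ.1))

end Singular

section Blowup

variable {H H₁ H₂ : Set (Finset ℕ)} {J J' J₁ J₂ : Finset ℕ} {inf : ℕ}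

lemma blowdown_of_mem (h : inf ∈ J') : blowdown J inf J' = J'.erase inf ∪ J := if_pos h

lemma blowdown_of_notMem (h : inf ∉ J') : blowdown J inf J' = J' := if_neg h

lemma erase_subset_blowdown : J'.erase inf ⊆ blowdown J inf J' := by
  unfold blowdown
  split_ifs
  · exact Finset.subset_union_left
  · exact Finset.erase_subset _ _

lemma subset_blowdown_of_mem (h : inf ∈ J') : J ⊆ blowdown J inf J' := by
  rw [blowdown_of_mem h]
  exact Finset.subset_union_right

lemma subset_blowdown_of_notMem (h₁ : inf ∉ J₁) (h : J₁ ⊆ J₂) :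
    J₁ ⊆ blowdown J inf J₂ := fun _ hx =>
  erase_subset_blowdown (Finset.mem_erase.2 ⟨fun e => h₁ (e ▸ hx), h hx⟩)

lemma blowdown_mono (h : J₁ ⊆ J₂) : blowdown J inf J₁ ⊆ blowdown J inf J₂ := by
  by_cases h₁ : inf ∈ J₁
  · rw [blowdown_of_mem h₁, blowdown_of_mem (h h₁)]
    exact Finset.union_subset_union (Finset.erase_subset_erase _ h) subset_rfl
  · rw [blowdown_of_notMem h₁]
    exact subset_blowdown_of_notMem h₁ h

lemma mem_blowupH_iff (hH : ∀ K ∈ H, inf ∉ K) :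
    J' ∈ blowupH H J inf ↔ blowdown J inf J' ∈ H ∧ ¬J ⊆ J' := by
  constructor
  · rintro (⟨hJ'H, hJJ'⟩ | ⟨K, ⟨hK, hJK⟩, A, hA, rfl⟩)
    · rw [blowdown_of_notMem (hH J' hJ'H)]
      exact ⟨hJ'H, hJJ'⟩
    have hinfK := hH K hK
    refine ⟨?_, fun hsub => ?_⟩
    · convert hK using 1
      rw [blowdown_of_mem (by simp)]
      ext x
      grind
    · grind
  · rintro ⟨hK, hJJ'⟩
    by_cases h : inf ∈ J'
    · rw [blowdown_of_mem h] at hK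
      have hinfJ : inf ∉ J := fun hJ => hH _ hK (Finset.mem_union_right _ hJ)
      refine Or.inr ⟨_, ⟨hK, Finset.subset_union_right⟩, J' ∩ J,
        Finset.ssubset_iff_subset_ne.2 ⟨Finset.inter_subset_right, fun e => hJJ' (e ▸
          Finset.inter_subset_left)⟩, ?_⟩
      ext x
      grind
    · rw [blowdown_of_notMem h] at hK
      exact Or.inl ⟨hK, hJJ'⟩

lemma mem_of_mem_blowupH (h : J' ∈ blowupH H J inf) (hinf : inf ∉ J') : J' ∈ H := by
  rcases h with h | ⟨K, -, A, -, rfl⟩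
  · exact h.1
  · simp at hinf

lemma blowdown_mem_of_mem_blowupH (hH : ∀ K ∈ H, inf ∉ K) (h : J' ∈ blowupH H J inf) :
    blowdown J inf J' ∈ H :=
  ((mem_blowupH_iff hH).1 h).1

lemma blowupH_union :
    blowupH (H₁ ∪ H₂) J inf = blowupH H₁ J inf ∪ blowupH H₂ J inf := by
  ext J'
  simp only [blowupH, Set.mem_union, Set.mem_ofPred_eq]
  grind

lemma blowupH_eq_self (h : ∀ K ∈ H, ¬J ⊆ K) : blowupH H J inf = H := by
  ext J'
  simp only [blowupH, Set.mem_union, Set.mem_ofPred_eq]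
  grind

lemma Fabric.notMem_of_notMem_I {F : Fabric} (hinf : inf ∉ F.I) : ∀ K ∈ F.H, inf ∉ K :=
  fun K hK h => hinf (F.mem_sub K hK h)

def Fabric.blowup (F : Fabric) (J : Finset ℕ) (inf : ℕ) (hinf : inf ∉ F.I) : Fabric where
  I := insert inf F.I
  I_nonempty := Finset.insert_nonempty _ _
  H := blowupH F.H J inf
  mem_sub J' hJ' :=
    (Finset.insert_erase_subset inf J').trans <| Finset.insert_subset_insert _ <|
      erase_subset_blowdown.trans <| F.mem_sub _ (blowdown_mem_of_mem_blowupH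
        (F.notMem_of_notMem_I hinf) hJ')
  downward J' hJ' K hK := by
    rw [mem_blowupH_iff (F.notMem_of_notMem_I hinf)] at hJ' ⊢
    exact ⟨F.downward _ hJ'.1 _ (blowdown_mono hK), fun h => hJ'.2 (h.trans hK)⟩

end Blowup

section CharTransform

variable {G : PolySys} {J J' J₁ J₂ K : Finset ℕ} {inf : ℕ}

noncomputable def lamMapₗ (J J' : Finset ℕ) (inf : ℕ) : Vec →ₗ[ℝ] Vec where
  toFun := lamMap J J' inf
  map_add' σ τ := by
    ext j
    simp only [lamMap, Pi.add_apply, Finset.sum_add_distrib]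
    split_ifs <;> simp
  map_smul' a σ := by
    ext j
    simp only [lamMap, Pi.smul_apply, smul_eq_mul, RingHom.id_apply, ← Finset.mul_sum]
    split_ifs <;> simp

lemma coe_lamMapₗ : ⇑(lamMapₗ J J' inf) = lamMap J J' inf := rfl

lemma image_lamMap_suppCone_subset (hinf : inf ∈ J') :
    lamMap J J' inf '' suppCone K ⊆ suppCone J' := by
  rintro _ ⟨σ, hσ, rfl⟩
  refine ⟨fun j => ?_, fun j hj => ?_⟩
  · unfold lamMap
    split_ifs
    exacts [Finset.sum_nonneg fun i _ => hσ.1 i, hσ.1 j, le_rfl]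
  · simp [lamMap, hj, show j ≠ inf from fun h => hj (h ▸ hinf)]

/-- The new coordinate `Σ_{j ∈ J} a(j) - 1` lies in `(1/d)ℤ_{≥0}` because `|a|_J ≥ 1`. -/
lemma lamMap_sub_eVec_mem_latticePts {d : ℕ} (hd : 0 < d) (hinf : inf ∈ J') {a : Vec}
    (ha : a ∈ latticePts K d) (hsum : 1 ≤ ∑ j ∈ J, a j) :
    lamMap J J' inf a - eVec inf ∈ latticePts J' d := by
  choose m hm using ha.2
  have hd' : (0 : ℝ) < d := Nat.cast_pos.2 hd
  have hsum_eq : ∑ j ∈ J, a j = (∑ j ∈ J, m j : ℕ) / d := by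
    push_cast
    rw [Finset.sum_div]
    exact Finset.sum_congr rfl fun j _ => hm j
  have hdm : d ≤ ∑ j ∈ J, m j := by
    rw [hsum_eq, le_div_iff₀ hd', one_mul] at hsum
    exact_mod_cast hsum
  refine ⟨⟨fun j => ?_, fun j hj => ?_⟩, fun j => ?_⟩
  · by_cases hj : j = inf
    · simp [lamMap, eVec, hj, hsum]
    · by_cases hj' : j ∈ J' <;> simp [lamMap, eVec, hj, hj', ha.1.1 j]
  · simp [lamMap, eVec, hj, show j ≠ inf from fun h => hj (h ▸ hinf)]
  · by_cases hj : j = inf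
    · refine ⟨∑ j ∈ J, m j - d, ?_⟩
      simp only [lamMap, eVec, hj, if_true, Pi.sub_apply, hsum_eq, Nat.cast_sub hdm]
      field_simp
    · by_cases hj' : j ∈ J'
      · simpa [lamMap, eVec, hj, hj'] using ⟨m j, hm j⟩
      · exact ⟨0, by simp [lamMap, eVec, hj, hj']⟩

lemma charΔ_of_notMem (h : inf ∉ J') : charΔ G J inf J' = G.Δ J' := if_neg h

lemma charΔ_of_mem (h : inf ∈ J') :
    charΔ G J inf J' = (fun σ => σ - eVec inf) ''
      posHull J' (lamMap J J' inf '' G.Δ (blowdown J inf J')) := if_pos h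

lemma charΔ_eq_posHull (h : inf ∈ J') {A : Set Vec}
    (hA : G.Δ (blowdown J inf J') = posHull (blowdown J inf J') A) :
    charΔ G J inf J' = posHull J' ((fun a => lamMap J J' inf a - eVec inf) '' A) := by
  rw [charΔ_of_mem h, hA, ← coe_lamMapₗ,
    posHull_image_posHull _ (image_lamMap_suppCone_subset h), image_sub_posHull,
    Set.image_image]

lemma isCharPoly_charΔ (hJ : J ∈ Sing G) (hinf : inf ∉ G.F.I)
    (hJ' : J' ∈ blowupH G.F.H J inf) : IsCharPoly J' G.d (charΔ G J inf J') := by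
  by_cases h : inf ∈ J'
  · have hK := blowdown_mem_of_mem_blowupH (G.F.notMem_of_notMem_I hinf) hJ'
    obtain ⟨A, hA, hΔ⟩ := G.char _ hK
    refine ⟨_, ?_, charΔ_eq_posHull h hΔ⟩
    rintro _ ⟨a, ha, rfl⟩
    exact lamMap_sub_eVec_mem_latticePts G.d_pos h (hA ha) <|
      one_le_sum_of_mem_sing_of_subset hJ hK (subset_blowdown_of_mem h)
        (hΔ ▸ subset_posHull _ A ha)
  · rw [charΔ_of_notMem h]
    exact G.char J' (mem_of_mem_blowupH hJ' h)


lemma restrict_lamMap_of_notMem (hinf : inf ∉ J₁) (h12 : J₁ ⊆ J₂) (σ : Vec) :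
    restrict J₁ (lamMap J J₂ inf σ) = restrict J₁ σ := by
  ext j
  by_cases hj : j ∈ J₁
  · simp [restrict_apply, lamMap, hj, h12 hj, show j ≠ inf from fun h => hinf (h ▸ hj)]
  · simp [restrict_apply, hj]

lemma restrict_lamMap_of_mem (hinf : inf ∈ J₁) (h12 : J₁ ⊆ J₂) (hJK : J ⊆ K)
    (hK : J₁.erase inf ⊆ K) (σ : Vec) :
    restrict J₁ (lamMap J J₂ inf σ) = lamMap J J₁ inf (restrict K σ) := by
  ext j
  by_cases hj : j = inf
  · subst hj
    simp only [restrict_apply, lamMap, hinf, if_true]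
    exact Finset.sum_congr rfl fun i hi => (if_pos (hJK hi)).symm
  · by_cases hj1 : j ∈ J₁
    · simp [restrict_apply, lamMap, hj, hj1, h12 hj1, hK (Finset.mem_erase.2 ⟨hj, hj1⟩)]
    · simp [restrict_apply, lamMap, hj, hj1]

lemma restrict_eVec_of_mem (h : inf ∈ J) : restrict J (eVec inf) = eVec inf := by
  ext j
  by_cases hj : j = inf <;> simp [restrict_apply, eVec, hj, h]

lemma restrict_eVec_of_notMem (h : inf ∉ J) : restrict J (eVec inf) = 0 := by
  ext j
  by_cases hj : j = inf
  · simp [restrict_apply, hj, h]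
  · simp [restrict_apply, eVec, hj]

lemma image_restrict_charΔ_of_mem (h12 : J₁ ⊆ J₂) (h₂ : inf ∈ J₂) :
    restrict J₁ '' charΔ G J inf J₂ = (fun σ => σ - restrict J₁ (eVec inf)) ''
      posHull J₁ ((fun σ => restrict J₁ (lamMap J J₂ inf σ)) ''
        G.Δ (blowdown J inf J₂)) := by
  rw [charΔ_of_mem h₂, ← Set.image_image (restrict J₁) (lamMap J J₂ inf),
    ← image_posHull _ (image_restrict_suppCone h12), Set.image_image, Set.image_image]
  simp only [map_sub]

lemma charΔ_compat (hinf : inf ∉ G.F.I) (h₁ : J₁ ∈ blowupH G.F.H J inf)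
    (h₂ : J₂ ∈ blowupH G.F.H J inf) (h12 : J₁ ⊆ J₂) :
    charΔ G J inf J₁ = restrict J₁ '' charΔ G J inf J₂ := by
  have hH := G.F.notMem_of_notMem_I hinf
  by_cases hm₂ : inf ∈ J₂
  swap
  · have hm₁ : inf ∉ J₁ := fun h => hm₂ (h12 h)
    rw [charΔ_of_notMem hm₁, charΔ_of_notMem hm₂]
    exact G.Δ_eq_image_restrict (mem_of_mem_blowupH h₁ hm₁) (mem_of_mem_blowupH h₂ hm₂) h12
  have hK₂ := blowdown_mem_of_mem_blowupH hH h₂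
  rw [image_restrict_charΔ_of_mem h12 hm₂]
  by_cases hm₁ : inf ∈ J₁
  · have hK₁ := blowdown_mem_of_mem_blowupH hH h₁
    rw [charΔ_of_mem hm₁, restrict_eVec_of_mem hm₁,
      G.Δ_eq_image_restrict hK₁ hK₂ (blowdown_mono h12), Set.image_image]
    congr 2
    exact Set.image_congr fun σ _ =>
      (restrict_lamMap_of_mem hm₁ h12 (subset_blowdown_of_mem hm₁) erase_subset_blowdown
        σ).symm
  · have hJ₁ := mem_of_mem_blowupH h₁ hm₁
    rw [charΔ_of_notMem hm₁, restrict_eVec_of_notMem hm₁,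
      Set.image_congr fun σ _ => restrict_lamMap_of_notMem hm₁ h12 σ,
      ← G.Δ_eq_image_restrict hJ₁ hK₂ (subset_blowdown_of_notMem hm₁ h12),
      (G.char J₁ hJ₁).posHull_eq]
    simp

lemma nonempty_charΔ (hinf : inf ∉ G.F.I) {J' : Finset ℕ} (hJ' : J' ∈ blowupH G.F.H J inf) :
    (charΔ G J inf J').Nonempty := by
  by_cases h : inf ∈ J'
  · rw [charΔ_of_mem h]
    exact ((G.nonempty _ (blowdown_mem_of_mem_blowupH (G.F.notMem_of_notMem_I hinf)
      hJ')).image _).mono (subset_posHull _ _) |>.image _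
  · rw [charΔ_of_notMem h]
    exact G.nonempty J' (mem_of_mem_blowupH hJ' h)

noncomputable def PolySys.charTransform (G : PolySys) (J : Finset ℕ) (inf : ℕ)
    (hJ : J ∈ Sing G) (hinf : inf ∉ G.F.I) : PolySys where
  F := G.F.blowup J inf hinf
  d := G.d
  d_pos := G.d_pos
  Δ := charΔ G J inf
  char _ hJ' := isCharPoly_charΔ hJ hinf hJ'
  nonempty _ hJ' := nonempty_charΔ hinf hJ'
  compat _ h₁ _ h₂ h12 := charΔ_compat hinf h₁ h₂ h12

lemma PolySys.isCharTransformAt_charTransform (hJ : J ∈ Sing G) (hinf : inf ∉ G.F.I) :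
    IsCharTransformAt G (G.charTransform J inf hJ hinf) J inf :=
  ⟨hJ, rfl, hinf, rfl, rfl, fun _ _ => rfl⟩

end CharTransform

section Relabel

variable {ρ : ℕ ≃ ℕ} {J J' K : Finset ℕ} {inf : ℕ}

def relabel (ρ : ℕ ≃ ℕ) : Vec →ₗ[ℝ] Vec where
  toFun σ j := σ (ρ.symm j)
  map_add' _ _ := rfl
  map_smul' _ _ := rfl

lemma relabel_apply (σ : Vec) (j : ℕ) : relabel ρ σ j = σ (ρ.symm j) := rfl

lemma image_relabel_suppCone (J : Finset ℕ) :
    relabel ρ '' suppCone J = suppCone (J.map ρ.toEmbedding) := by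
  refine Set.Subset.antisymm ?_ fun σ hσ => ⟨relabel ρ.symm σ,
    ⟨fun j => hσ.1 _, fun j hj => hσ.2 _ (by simpa using hj)⟩, by ext; simp [relabel_apply]⟩
  rintro _ ⟨σ, hσ, rfl⟩
  exact ⟨fun j => hσ.1 _, fun j hj => hσ.2 _ (by simpa [Finset.mem_map_equiv] using hj)⟩

lemma image_relabel_posHull (J : Finset ℕ) (S : Set Vec) :
    relabel ρ '' posHull J S = posHull (J.map ρ.toEmbedding) (relabel ρ '' S) :=
  image_posHull _ (image_relabel_suppCone J) S

lemma relabel_eVec : relabel ρ (eVec inf) = eVec (ρ inf) := by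
  ext j
  by_cases hj : j = ρ inf
  · simp [relabel_apply, eVec, hj]
  · have hj' : ρ.symm j ≠ inf := fun h => hj (by rw [← h]; simp)
    simp [relabel_apply, eVec, hj, hj']

lemma sum_map_relabel (J : Finset ℕ) (σ : Vec) :
    ∑ j ∈ J.map ρ.toEmbedding, relabel ρ σ j = ∑ j ∈ J, σ j := by
  simp [Finset.sum_map, relabel_apply]

lemma relabel_lamMap (σ : Vec) :
    relabel ρ (lamMap J J' inf σ) =
      lamMap (J.map ρ.toEmbedding) (J'.map ρ.toEmbedding) (ρ inf) (relabel ρ σ) := by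
  ext j
  by_cases hj : j = ρ inf
  · subst hj
    simp [relabel_apply, lamMap]
  · have hj' : ρ.symm j ≠ inf := fun h => hj (by rw [← h]; simp)
    simp [relabel_apply, lamMap, hj, hj', Finset.mem_map_equiv]

lemma contactExp_image_relabel (J : Finset ℕ) (Δ : Set Vec) :
    contactExp (J.map ρ.toEmbedding) (relabel ρ '' Δ) = contactExp J Δ := by
  simp only [contactExp, Finset.map_eq_empty, Set.image_image, sum_map_relabel]

lemma relabel_eq_of_eqOn {ρ' : ℕ ≃ ℕ} (h : ∀ x ∈ K, ρ' x = ρ x) {σ : Vec}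
    (hσ : σ ∈ suppCone K) : relabel ρ' σ = relabel ρ σ := by
  ext j
  simp only [relabel_apply]
  by_cases hj : ρ.symm j ∈ K
  · rw [(Equiv.symm_apply_eq ρ').2 (by rw [h _ hj]; simp)]
  · have hj' : ρ'.symm j ∉ K := fun hK => hj (by
      rw [(Equiv.symm_apply_eq ρ).2 (by rw [← h _ hK]; simp)]; exact hK)
    rw [hσ.2 _ hj, hσ.2 _ hj']

lemma blowdown_map :
    blowdown (J.map ρ.toEmbedding) (ρ inf) (J'.map ρ.toEmbedding) =
      (blowdown J inf J').map ρ.toEmbedding := by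
  unfold blowdown
  by_cases h : inf ∈ J'
  · simp [h, Finset.map_union, Finset.map_erase]
  · simp [h]

lemma map_mem_blowupH_map_iff {H : Set (Finset ℕ)} (hH : ∀ K ∈ H, inf ∉ K) :
    J'.map ρ.toEmbedding ∈
        blowupH (Finset.map ρ.toEmbedding '' H) (J.map ρ.toEmbedding) (ρ inf) ↔
      J' ∈ blowupH H J inf := by
  have hH' : ∀ K ∈ Finset.map ρ.toEmbedding '' H, ρ inf ∉ K := by
    rintro _ ⟨K, hK, rfl⟩
    simpa [Finset.mem_map_equiv] using hH K hK
  rw [mem_blowupH_iff hH, mem_blowupH_iff hH', blowdown_map,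
    (Finset.map_injective _).mem_set_image, Finset.map_subset_map]

lemma map_blowupH {H : Set (Finset ℕ)} (hH : ∀ K ∈ H, inf ∉ K) :
    Finset.map ρ.toEmbedding '' blowupH H J inf =
      blowupH (Finset.map ρ.toEmbedding '' H) (J.map ρ.toEmbedding) (ρ inf) := by
  ext M
  obtain ⟨M, rfl⟩ := (Equiv.finsetCongr ρ).surjective M
  rw [Equiv.finsetCongr_apply, (Finset.map_injective _).mem_set_image,
    map_mem_blowupH_map_iff hH]

lemma charΔ_relabel {E G : PolySys} (hinf : inf ∉ E.F.I)
    (hΔ : ∀ M ∈ E.F.H, G.Δ (M.map ρ.toEmbedding) = relabel ρ '' E.Δ M)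
    (hJ' : J' ∈ blowupH E.F.H J inf) :
    charΔ G (J.map ρ.toEmbedding) (ρ inf) (J'.map ρ.toEmbedding) =
      relabel ρ '' charΔ E J inf J' := by
  by_cases h : inf ∈ J'
  · have hK := blowdown_mem_of_mem_blowupH (E.F.notMem_of_notMem_I hinf) hJ'
    rw [charΔ_of_mem (by simpa using h), charΔ_of_mem h, blowdown_map, hΔ _ hK,
      Set.image_image, Set.image_image]
    simp only [map_sub, relabel_eVec]
    rw [← Set.image_image (· - eVec (ρ inf)) (relabel ρ), image_relabel_posHull,
      Set.image_image]
    simp only [relabel_lamMap]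
  · rw [charΔ_of_notMem (by simpa using h), charΔ_of_notMem h,
      hΔ _ (mem_of_mem_blowupH hJ' h)]

lemma exists_equiv_eqOn_fresh (ρ : ℕ ≃ ℕ) {s : Finset ℕ} {a : ℕ} (ha : a ∉ s)
    (t : Finset ℕ) : ∃ ρ' : ℕ ≃ ℕ, (∀ x ∈ s, ρ' x = ρ x) ∧ ρ' a ∉ t := by
  obtain ⟨b, hb⟩ := Infinite.exists_notMem_finset (t ∪ s.map ρ.toEmbedding)
  rw [Finset.mem_union, not_or] at hb
  refine ⟨ρ.trans (Equiv.swap (ρ a) b), fun x hx => ?_, by simpa using hb.1⟩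
  have hxa : ρ x ≠ ρ a := fun e => ha (ρ.injective e ▸ hx)
  have hxb : ρ x ≠ b := fun e => hb.2 (e ▸ Finset.mem_map_of_mem _ hx)
  simp [Equiv.swap_apply_of_ne_of_ne hxa hxb]

end Relabel

section Components

variable {S : Set (Finset ℕ)} {J K x y : Finset ℕ}

lemma connectedComponentIn_eq_of_subset (hJ : J ∈ S) (hK : K ∈ S) (h : J ⊆ K) :
    connectedComponentIn S J = connectedComponentIn S K := by
  have hJK : J ⤳ K := specializes_iff_forall_open.2 fun U hU hKU => hU K hKU J h
  have hpair : IsPreconnected ({J, K} : Set (Finset ℕ)) :=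
    (isPreconnected_singleton (x := J)).subset_closure
      (Set.singleton_subset_iff.2 (Set.mem_insert J {K})) <|
      Set.insert_subset (subset_closure (Set.mem_singleton J)) <|
        Set.singleton_subset_iff.2 (specializes_iff_mem_closure.1 hJK)
  exact connectedComponentIn_eq <| hpair.subset_connectedComponentIn (Set.mem_insert J {K})
    (Set.insert_subset hJ (Set.singleton_subset_iff.2 hK)) (Set.mem_insert_of_mem J rfl)

def IsComparabilityClosed (S C : Set (Finset ℕ)) : Prop :=
  C ⊆ S ∧ ∀ J ∈ S, ∀ K ∈ S, J ⊆ K → (J ∈ C ↔ K ∈ C)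

lemma isComparabilityClosed_connectedComponentIn (x : Finset ℕ) :
    IsComparabilityClosed S (connectedComponentIn S x) := by
  refine ⟨connectedComponentIn_subset S x,
    fun J hJ K hK h => ⟨fun hJx => ?_, fun hKx => ?_⟩⟩
  · rw [connectedComponentIn_eq hJx, connectedComponentIn_eq_of_subset hJ hK h]
    exact mem_connectedComponentIn hK
  · rw [connectedComponentIn_eq hKx, ← connectedComponentIn_eq_of_subset hJ hK h]
    exact mem_connectedComponentIn hJ

lemma connectedComponentIn_sdiff_connectedComponentIn (hy : y ∈ S)
    (hxy : y ∉ connectedComponentIn S x) :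
    connectedComponentIn (S \ connectedComponentIn S x) y = connectedComponentIn S y := by
  refine (connectedComponentIn_mono y Set.sdiff_subset).antisymm <|
    isPreconnected_connectedComponentIn.subset_connectedComponentIn (mem_connectedComponentIn hy)
      fun z hz => ⟨connectedComponentIn_subset S y hz, fun hzx => hxy ?_⟩
  rw [connectedComponentIn_eq hzx, ← connectedComponentIn_eq hz]
  exact mem_connectedComponentIn hy

end Components

section Reduction

lemma hasReduction_of_sing_eq_empty {G : PolySys} (h : Sing G = ∅) : HasReduction G :=
  ⟨0, fun _ => G, rfl, fun _ hi => absurd hi (Nat.not_lt_zero _), h⟩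

lemma HasReduction.of_isCharTransform {G G' : PolySys} {J : Finset ℕ}
    (h : IsCharTransform G G' J) (h' : HasReduction G') : HasReduction G := by
  obtain ⟨k, seq, rfl, hstep, hend⟩ := h'
  refine ⟨k + 1, fun i => Nat.casesOn i G seq, rfl, fun i hi => ?_, hend⟩
  cases i with
  | zero => exact ⟨J, h⟩
  | succ i => exact hstep i (by omega)

theorem HasReduction.induction {P : PolySys → Prop} (base : ∀ G, Sing G = ∅ → P G)
    (step : ∀ G G' J, IsCharTransform G G' J → P G' → P G) {G : PolySys}
    (h : HasReduction G) : P G := by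
  obtain ⟨k, seq, rfl, hstep, hend⟩ := h
  induction k generalizing seq with
  | zero => exact base _ hend
  | succ k ih =>
    obtain ⟨J, hJ⟩ := hstep 0 k.succ_pos
    exact step _ _ J hJ (ih (fun i => seq (i + 1)) (fun i hi => hstep (i + 1) (by omega)) hend)

end Reduction

section Lift

def AgreesWithRed (E G : PolySys) (C : Set (Finset ℕ)) : Prop :=
  E.F.H = (G.red C).F.H ∧ ∀ J ∈ E.F.H, E.Δ J = G.Δ J

/-- `G'` arises from `G` by replacing the strata `H_C` of `Red_C(G)` with a copy of `E`
relabelled by `ρ`, leaving the remaining strata of `G` untouched. -/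
structure IsLift (G : PolySys) (C : Set (Finset ℕ)) (E G' : PolySys) (ρ : ℕ ≃ ℕ) :
    Prop where
  strata_eq : G'.F.H = Finset.map ρ.toEmbedding '' E.F.H ∪ (G.F.H \ (G.red C).F.H)
  Δ_map : ∀ M ∈ E.F.H, G'.Δ (M.map ρ.toEmbedding) = relabel ρ '' E.Δ M
  Δ_away : ∀ K ∈ G.F.H \ (G.red C).F.H, G'.Δ K = G.Δ K
  map_mem_red :
    ∀ M ∈ E.F.H, M.map ρ.toEmbedding ∈ G.F.H → M.map ρ.toEmbedding ∈ (G.red C).F.H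
  I_subset : G.F.I ⊆ G'.F.I

variable {G G' E E' : PolySys} {C : Set (Finset ℕ)} {ρ : ℕ ≃ ℕ} {J K : Finset ℕ}

lemma PolySys.Δ_eq_of_subset (hK : K ∈ G.F.H) (hK' : K ∈ G'.F.H) (hJK : J ⊆ K)
    (h : G'.Δ K = G.Δ K) : G'.Δ J = G.Δ J := by
  rw [G'.Δ_eq_image_restrict (G'.F.downward K hK' J hJK) hK' hJK,
    G.Δ_eq_image_restrict (G.F.downward K hK J hJK) hK hJK, h]

lemma mem_red_iff_of_mem_sing (hC : IsComparabilityClosed (Sing G) C) (hK : K ∈ Sing G) :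
    K ∈ (G.red C).F.H ↔ K ∈ C := by
  refine ⟨fun ⟨K', ⟨hK'C, _⟩, hKK'⟩ => (hC.2 K hK K' (hC.1 hK'C) hKK').2 hK'C,
    fun hKC => ⟨K, ⟨hKC, hK.1⟩, subset_rfl⟩⟩

lemma mem_sdiff_red_of_mem_sdiff (hC : IsComparabilityClosed (Sing G) C)
    (hK : K ∈ Sing G \ C) : K ∈ G.F.H \ (G.red C).F.H :=
  ⟨hK.1.1, fun h => hK.2 ((mem_red_iff_of_mem_sing hC hK.1).1 h)⟩

lemma AgreesWithRed.of_eqOn (hE : AgreesWithRed E G C) (hCG : C ⊆ G.F.H) (hCG' : C ⊆ G'.F.H)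
    (hΔ : ∀ K ∈ C, G'.Δ K = G.Δ K) : AgreesWithRed E G' C := by
  refine ⟨?_, fun J hJ => ?_⟩
  · rw [hE.1]
    ext J
    exact ⟨fun ⟨K, ⟨hKC, _⟩, hJK⟩ => ⟨K, ⟨hKC, hCG' hKC⟩, hJK⟩,
      fun ⟨K, ⟨hKC, _⟩, hJK⟩ => ⟨K, ⟨hKC, hCG hKC⟩, hJK⟩⟩
  · obtain ⟨K, ⟨hKC, hKG⟩, hJK⟩ := hE.1 ▸ hJ
    rw [hE.2 J hJ, PolySys.Δ_eq_of_subset hKG (hCG' hKC) hJK (hΔ K hKC)]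

namespace IsLift

lemma refl (hE : AgreesWithRed E G C) : IsLift G C E G (Equiv.refl ℕ) where
  strata_eq := by
    have hsub : (G.red C).F.H ⊆ G.F.H :=
      fun _ ⟨K, ⟨_, hK⟩, hJK⟩ => G.F.downward K hK _ hJK
    simp [hE.1, Set.union_sdiff_cancel hsub]
  Δ_map M hM := by
    rw [hE.2 M hM, show ⇑(relabel (Equiv.refl ℕ)) = id from rfl, Set.image_id]
    simp
  Δ_away _ _ := rfl
  map_mem_red M hM _ := by simpa [hE.1] using hM
  I_subset := subset_rfl

lemma congr (hL : IsLift G C E G' ρ) {ρ' : ℕ ≃ ℕ} (h : ∀ x ∈ E.F.I, ρ' x = ρ x) :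
    IsLift G C E G' ρ' := by
  have hmap : ∀ M ∈ E.F.H, M.map ρ'.toEmbedding = M.map ρ.toEmbedding := fun M hM => by
    simp only [Finset.map_eq_image]
    exact Finset.image_congr fun x hx => h x (E.F.mem_sub M hM hx)
  refine ⟨?_, fun M hM => ?_, hL.Δ_away, fun M hM => hmap M hM ▸ hL.map_mem_red M hM,
    hL.I_subset⟩
  · rw [hL.strata_eq, Set.image_congr hmap]
  · rw [hmap M hM, hL.Δ_map M hM]
    exact Set.image_congr fun σ hσ => (relabel_eq_of_eqOn (fun x hx =>
      h x (E.F.mem_sub M hM hx)) (E.Δ_subset_suppCone hM hσ)).symm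

lemma map_mem_sing (hL : IsLift G C E G' ρ) (hJ : J ∈ Sing E) :
    J.map ρ.toEmbedding ∈ Sing G' :=
  ⟨hL.strata_eq ▸ Or.inl ⟨J, hJ.1, rfl⟩, by
    rw [hL.Δ_map J hJ.1, contactExp_image_relabel]; exact hJ.2⟩

/-- The image of a singular center of `E` is a singular stratum of `G` lying in `C`. -/
lemma not_map_subset (hL : IsLift G C E G' ρ) (hC : IsComparabilityClosed (Sing G) C)
    (hJ : J ∈ Sing E) : ∀ K ∈ G.F.H \ (G.red C).F.H, ¬J.map ρ.toEmbedding ⊆ K := by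
  rintro K ⟨hKG, hKC⟩ hJK
  have hKG' : K ∈ G'.F.H := hL.strata_eq ▸ Or.inr ⟨hKG, hKC⟩
  have hJG := G.F.downward K hKG _ hJK
  have hJsing : J.map ρ.toEmbedding ∈ Sing G := ⟨hJG, by
    rw [← PolySys.Δ_eq_of_subset hKG hKG' hJK (hL.Δ_away K ⟨hKG, hKC⟩)]
    exact (hL.map_mem_sing hJ).2⟩
  have hKsing := mem_sing_of_subset hJsing hKG hJK
  have hJC := (mem_red_iff_of_mem_sing hC hJsing).1 (hL.map_mem_red J hJ.1 hJG)
  exact hKC ((mem_red_iff_of_mem_sing hC hKsing).2 ((hC.2 _ hJsing K hKsing hJK).1 hJC))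

lemma charTransform (hL : IsLift G C E G' ρ) (hC : IsComparabilityClosed (Sing G) C)
    {inf : ℕ} (htr : IsCharTransformAt E E' J inf) (hfresh : ρ inf ∉ G'.F.I) :
    IsLift G C E' (G'.charTransform _ (ρ inf) (hL.map_mem_sing htr.1) hfresh) ρ := by
  obtain ⟨hJ, -, hinf, -, hH, hΔ⟩ := htr
  have hinfG : ρ inf ∉ G.F.I := fun h => hfresh (hL.I_subset h)
  refine ⟨?_, fun M hM => ?_, fun K hK => ?_, fun M hM hMG => ?_,
    hL.I_subset.trans (Finset.subset_insert _ _)⟩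
  · change blowupH G'.F.H _ _ = _
    rw [hL.strata_eq, blowupH_union, blowupH_eq_self (hL.not_map_subset hC hJ),
      ← map_blowupH (E.F.notMem_of_notMem_I hinf), hH]
  · rw [hΔ M hM]
    exact charΔ_relabel hinf hL.Δ_map (hH ▸ hM)
  · change charΔ G' _ _ K = _
    rw [charΔ_of_notMem fun h => hinfG (G.F.mem_sub K hK.1 h), hL.Δ_away K hK]
  · rw [hH] at hM
    by_cases h : inf ∈ M
    · exact absurd (G.F.mem_sub _ hMG (Finset.mem_map_of_mem _ h)) hinfG
    · exact hL.map_mem_red M (mem_of_mem_blowupH hM h) hMG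

lemma sing_eq (hL : IsLift G C E G' ρ) (hC : IsComparabilityClosed (Sing G) C)
    (hE : Sing E = ∅) : Sing G' = Sing G \ C := by
  ext K
  constructor
  · rintro ⟨hK, hδ⟩
    rcases hL.strata_eq ▸ hK with ⟨M, hM, rfl⟩ | hK
    · have hM : M ∈ Sing E := ⟨hM, by rwa [hL.Δ_map M hM, contactExp_image_relabel] at hδ⟩
      simp [hE] at hM
    · exact ⟨⟨hK.1, hL.Δ_away K hK ▸ hδ⟩,
        fun hKC => hK.2 ⟨K, ⟨hKC, hK.1⟩, subset_rfl⟩⟩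
  · intro hK
    have hAway := mem_sdiff_red_of_mem_sdiff hC hK
    exact ⟨hL.strata_eq ▸ Or.inr hAway, (hL.Δ_away K hAway).symm ▸ hK.1.2⟩

theorem hasReduction (hC : IsComparabilityClosed (Sing G) C)
    (hcont : ∀ G'' : PolySys, Sing G'' = Sing G \ C →
      (∀ K ∈ Sing G \ C, G''.Δ K = G.Δ K) → HasReduction G'')
    (hE : HasReduction E) :
    ∀ {G' : PolySys} {ρ : ℕ ≃ ℕ}, IsLift G C E G' ρ → HasReduction G' := by
  refine HasReduction.induction (P := fun E => ∀ {G' ρ}, IsLift G C E G' ρ → HasReduction G')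
    (fun E hE G' ρ hL => hcont G' (hL.sing_eq hC hE) fun K hK =>
      hL.Δ_away K (mem_sdiff_red_of_mem_sdiff hC hK)) ?_ hE
  rintro E E' J ⟨inf, htr⟩ ih G' ρ hL
  obtain ⟨ρ', hρ', hfresh⟩ := exists_equiv_eqOn_fresh ρ htr.2.2.1 G'.F.I
  exact (ih ((hL.congr hρ').charTransform hC htr hfresh)).of_isCharTransform
    ⟨ρ' inf, PolySys.isCharTransformAt_charTransform _ _⟩

end IsLift

end Lift

theorem hasReduction_of_forall_agreesWithRed (G : PolySys)
    (h : ∀ x ∈ Sing G, ∃ E, AgreesWithRed E G (connectedComponentIn (Sing G) x) ∧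
      HasReduction E) : HasReduction G := by
  induction hn : (Sing G).ncard using Nat.strong_induction_on generalizing G with
  | _ n ih =>
  rcases (Sing G).eq_empty_or_nonempty with hG | ⟨x, hx⟩
  · exact hasReduction_of_sing_eq_empty hG
  have hC := isComparabilityClosed_connectedComponentIn (S := Sing G) x
  obtain ⟨E, hE, hred⟩ := h x hx
  refine (IsLift.refl hE).hasReduction hC (fun G' hsing hΔ => ?_) hred
  refine ih _ ?_ G' (fun y hy => ?_) rfl
  · rw [← hn, hsing]
    exact Set.ncard_lt_ncard (hC.1.sdiff_ssubset_of_nonempty ⟨x, mem_connectedComponentIn hx⟩)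
      (finite_sing G)
  rw [hsing] at hy
  have hcomp := connectedComponentIn_sdiff_connectedComponentIn hy.1 hy.2
  have hsub : connectedComponentIn (Sing G) y ⊆ Sing G \ connectedComponentIn (Sing G) x :=
    hcomp ▸ connectedComponentIn_subset _ y
  obtain ⟨Ey, hEy, hredy⟩ := h y hy.1
  rw [hsing, hcomp]
  exact ⟨Ey, hEy.of_eqOn (fun K hK => (hsub hK).1.1) (fun K hK => (hsing ▸ hsub hK).1)
    (fun K hK => hΔ K (hsub hK)), hredy⟩

/-- Connected components decomposition: if each reduction `Red_C(D)` to a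
connected component `C` of `Sing(D)` admits a reduction of singularities, then
so does `D`. -/
theorem connected_components_reduction (D : PolySys)
    (h : ∀ x ∈ Sing D, HasReduction (D.red (connectedComponentIn (Sing D) x))) :
    HasReduction D :=
  hasReduction_of_forall_agreesWithRed D fun x hx => ⟨_, ⟨rfl, fun _ _ => rfl⟩, h x hx⟩

end RedSing
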